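/- Let G ≅ ⟨a | b⟩ be a ball with a, b and G numbers, and suppose that as values G − a = 1/2^p for some integer p ≥ 0. Then for every positive integer k, with −k taken in canonical form, G : (−k) = G − 1/2^p + 1/2^{p+k}. -/

import Mathlib

section CGTPort

-- Combinatorial game theory (`SetTheory.PGame`, `SetTheory.Game`, `powHalf`, `Numeric`) has
-- been removed from Mathlib; the notions used below are re-defined here with their old meaning.

universe u

namespace SetTheory

inductive PGame : Type (u + 1)
  | mk : ∀ α β : Type u, (α → PGame) → (β → PGame) → PGame

namespace PGame

def LeftMoves : PGame.{u} → Type u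
  | mk l _ _ _ => l

def RightMoves : PGame.{u} → Type u
  | mk _ r _ _ => r

def moveLeft : ∀ g : PGame.{u}, LeftMoves g → PGame.{u}
  | mk _ _ L _ => L

def moveRight : ∀ g : PGame.{u}, RightMoves g → PGame.{u}
  | mk _ _ _ R => R

-- `(x ≤ y, x ⧏ y)`, defined by simultaneous recursion (with `⧏` in its positive form).
noncomputable def leLf (x : PGame.{u}) : PGame.{u} → Prop × Prop :=
  PGame.rec (motive := fun _ => PGame.{u} → Prop × Prop)
    (fun _ _ _ _ IHL IHR y =>
      PGame.rec (motive := fun _ => Prop × Prop)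
        (fun yl yr yL yR JL JR =>
          ((∀ i, (IHL i (mk yl yr yL yR)).2) ∧ ∀ j, (JR j).2,
           (∃ i, (JL i).1) ∨ ∃ j, (IHR j (mk yl yr yL yR)).1))
        y) x

noncomputable instance : LE PGame.{u} := ⟨fun x y => (leLf x y).1⟩

def LF (x y : PGame.{u}) : Prop := (leLf x y).2

instance : LT PGame.{u} := ⟨fun x y => x ≤ y ∧ ¬ y ≤ x⟩

theorem le_iff (x y : PGame.{u}) :
    x ≤ y ↔ (∀ i, LF (x.moveLeft i) y) ∧ ∀ j, LF x (y.moveRight j) := by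
  cases x; cases y; exact Iff.rfl

theorem lf_iff (x y : PGame.{u}) :
    LF x y ↔ (∃ i, x ≤ y.moveLeft i) ∨ ∃ j, x.moveRight j ≤ y := by
  cases x; cases y; exact Iff.rfl

theorem pg_le_refl (x : PGame.{u}) : x ≤ x := by
  induction x with
  | mk xl xr xL xR ihL ihR =>
    exact (le_iff _ _).2 ⟨fun i => (lf_iff _ _).2 (Or.inl ⟨i, ihL i⟩),
      fun j => (lf_iff _ _).2 (Or.inr ⟨j, ihR j⟩)⟩

theorem le_trans_aux (x y z : PGame.{u}) :
    (x ≤ y → y ≤ z → x ≤ z) ∧ (LF x y → y ≤ z → LF x z) ∧ (x ≤ y → LF y z → LF x z) := by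
  induction x generalizing y z with
  | mk xl xr xL xR ihxL ihxR =>
  induction y generalizing z with
  | mk yl yr yL yR ihyL ihyR =>
  induction z with
  | mk zl zr zL zR ihzL ihzR =>
  refine ⟨fun hxy hyz => ?_, fun hxy hyz => ?_, fun hxy hyz => ?_⟩
  · exact (le_iff _ _).2 ⟨fun i => (ihxL i _ _).2.1 (((le_iff _ _).1 hxy).1 i) hyz,
      fun j => (ihzR j).2.2 hxy (((le_iff _ _).1 hyz).2 j)⟩
  · rcases (lf_iff _ _).1 hxy with ⟨i, h⟩ | ⟨j, h⟩
    · exact (ihyL i _).2.2 h (((le_iff _ _).1 hyz).1 i)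
    · exact (lf_iff _ _).2 (Or.inr ⟨j, (ihxR j _ _).1 h hyz⟩)
  · rcases (lf_iff _ _).1 hyz with ⟨k, h⟩ | ⟨j, h⟩
    · exact (lf_iff _ _).2 (Or.inl ⟨k, (ihzL k).1 hxy h⟩)
    · exact (ihyR j _).2.1 (((le_iff _ _).1 hxy).2 j) h

theorem pg_le_trans {x y z : PGame.{u}} (h1 : x ≤ y) (h2 : y ≤ z) : x ≤ z :=
  (le_trans_aux x y z).1 h1 h2

instance setoid : Setoid PGame.{u} :=
  ⟨fun x y => x ≤ y ∧ y ≤ x,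
    ⟨fun x => ⟨pg_le_refl x, pg_le_refl x⟩, fun h => ⟨h.2, h.1⟩,
      fun h1 h2 => ⟨pg_le_trans h1.1 h2.1, pg_le_trans h2.2 h1.2⟩⟩⟩

theorem equiv_def {x y : PGame.{u}} : x ≈ y ↔ x ≤ y ∧ y ≤ x := Iff.rfl

instance : Zero PGame.{u} := ⟨mk PEmpty PEmpty PEmpty.elim PEmpty.elim⟩

instance : One PGame.{u} := ⟨mk PUnit PEmpty (fun _ => 0) PEmpty.elim⟩

def neg : PGame.{u} → PGame.{u}
  | mk l r L R => mk r l (fun j => neg (R j)) (fun i => neg (L i))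

instance : Neg PGame.{u} := ⟨neg⟩

theorem neg_mk (l r : Type u) (L : l → PGame.{u}) (R : r → PGame.{u}) :
    -(mk l r L R) = mk r l (fun j => -(R j)) (fun i => -(L i)) := rfl

theorem neg_le_aux (x y : PGame.{u}) : (x ≤ y → -y ≤ -x) ∧ (LF x y → LF (-y) (-x)) := by
  induction x generalizing y with
  | mk xl xr xL xR ihxL ihxR =>
  induction y with
  | mk yl yr yL yR ihyL ihyR =>
  constructor
  · intro h
    rw [neg_mk, neg_mk]
    exact (le_iff _ _).2 ⟨fun i => (ihyR i).2 (((le_iff _ _).1 h).2 i),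
      fun j => (ihxL j _).2 (((le_iff _ _).1 h).1 j)⟩
  · intro h
    rw [neg_mk, neg_mk]
    rcases (lf_iff _ _).1 h with ⟨i, h'⟩ | ⟨j, h'⟩
    · exact (lf_iff _ _).2 (Or.inr ⟨i, (ihyL i).1 h'⟩)
    · exact (lf_iff _ _).2 (Or.inl ⟨j, (ihxR j _).1 h'⟩)

def addY (xl xr : Type u) (fL : xl → PGame.{u} → PGame.{u}) (fR : xr → PGame.{u} → PGame.{u}) :
    PGame.{u} → PGame.{u}
  | mk yl yr yL yR =>
    mk (xl ⊕ yl) (xr ⊕ yr) (Sum.elim (fun i => fL i (mk yl yr yL yR)) (fun j => addY xl xr fL fR (yL j)))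
      (Sum.elim (fun i => fR i (mk yl yr yL yR)) (fun j => addY xl xr fL fR (yR j)))

def add : PGame.{u} → PGame.{u} → PGame.{u}
  | mk xl xr xL xR => addY xl xr (fun i => add (xL i)) (fun i => add (xR i))

instance : Add PGame.{u} := ⟨add⟩

instance : Sub PGame.{u} := ⟨fun x y => x + -y⟩

theorem add_mk (xl xr : Type u) (xL : xl → PGame.{u}) (xR : xr → PGame.{u})
    (yl yr : Type u) (yL : yl → PGame.{u}) (yR : yr → PGame.{u}) :
    mk xl xr xL xR + mk yl yr yL yR =
      mk (xl ⊕ yl) (xr ⊕ yr)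
        (Sum.elim (fun i => xL i + mk yl yr yL yR) (fun j => mk xl xr xL xR + yL j))
        (Sum.elim (fun i => xR i + mk yl yr yL yR) (fun j => mk xl xr xL xR + yR j)) := rfl

theorem add_le_add_right_aux (y x x' : PGame.{u}) :
    (x ≤ x' → x + y ≤ x' + y) ∧ (LF x x' → LF (x + y) (x' + y)) := by
  induction y generalizing x x' with
  | mk yl yr yL yR ihyL ihyR =>
  induction x generalizing x' with
  | mk xl xr xL xR ihxL ihxR =>
  induction x' with
  | mk xl' xr' xL' xR' ihx'L ihx'R =>
  constructor
  · intro h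
    rw [add_mk, add_mk]
    refine (le_iff _ _).2 ⟨?_, ?_⟩
    · rintro (i | k)
      · exact (ihxL i _).2 (((le_iff _ _).1 h).1 i)
      · exact (lf_iff _ _).2 (Or.inl ⟨Sum.inr k, (ihyL k _ _).1 h⟩)
    · rintro (j | k)
      · exact (ihx'R j).2 (((le_iff _ _).1 h).2 j)
      · exact (lf_iff _ _).2 (Or.inr ⟨Sum.inr k, (ihyR k _ _).1 h⟩)
  · intro h
    rcases (lf_iff _ _).1 h with ⟨i, h'⟩ | ⟨j, h'⟩
    · rw [add_mk, add_mk]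
      exact (lf_iff _ _).2 (Or.inl ⟨Sum.inl i, (ihx'L i).1 h'⟩)
    · rw [add_mk, add_mk]
      exact (lf_iff _ _).2 (Or.inr ⟨Sum.inl j, (ihxR j _).1 h'⟩)

theorem add_le_add_left_aux (y x x' : PGame.{u}) :
    (x ≤ x' → y + x ≤ y + x') ∧ (LF x x' → LF (y + x) (y + x')) := by
  induction y generalizing x x' with
  | mk yl yr yL yR ihyL ihyR =>
  induction x generalizing x' with
  | mk xl xr xL xR ihxL ihxR =>
  induction x' with
  | mk xl' xr' xL' xR' ihx'L ihx'R =>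
  constructor
  · intro h
    rw [add_mk, add_mk]
    refine (le_iff _ _).2 ⟨?_, ?_⟩
    · rintro (k | i)
      · exact (lf_iff _ _).2 (Or.inl ⟨Sum.inl k, (ihyL k _ _).1 h⟩)
      · exact (ihxL i _).2 (((le_iff _ _).1 h).1 i)
    · rintro (k | j)
      · exact (lf_iff _ _).2 (Or.inr ⟨Sum.inl k, (ihyR k _ _).1 h⟩)
      · exact (ihx'R j).2 (((le_iff _ _).1 h).2 j)
  · intro h
    rcases (lf_iff _ _).1 h with ⟨i, h'⟩ | ⟨j, h'⟩
    · rw [add_mk, add_mk]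
      exact (lf_iff _ _).2 (Or.inl ⟨Sum.inr i, (ihx'L i).1 h'⟩)
    · rw [add_mk, add_mk]
      exact (lf_iff _ _).2 (Or.inr ⟨Sum.inr j, (ihxR j _).1 h'⟩)

theorem add_le_add' {x x' y y' : PGame.{u}} (h1 : x ≤ x') (h2 : y ≤ y') : x + y ≤ x' + y' :=
  pg_le_trans ((add_le_add_right_aux y x x').1 h1) ((add_le_add_left_aux x' y y').1 h2)

def Numeric : PGame.{u} → Prop
  | ⟨_, _, L, R⟩ => (∀ i j, L i < R j) ∧ (∀ i, Numeric (L i)) ∧ ∀ j, Numeric (R j)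

def powHalf : ℕ → PGame.{u}
  | 0 => 1
  | n + 1 => ⟨PUnit, PUnit, fun _ => 0, fun _ => powHalf n⟩

end PGame

abbrev Game : Type (u + 1) := Quotient PGame.setoid.{u}

namespace Game

instance : Zero Game.{u} := ⟨⟦0⟧⟩

instance : Neg Game.{u} :=
  ⟨Quotient.map Neg.neg fun x y h =>
    PGame.equiv_def.2 ⟨(PGame.neg_le_aux y x).1 (PGame.equiv_def.1 h).2,
      (PGame.neg_le_aux x y).1 (PGame.equiv_def.1 h).1⟩⟩

instance : Add Game.{u} :=
  ⟨Quotient.map₂ (· + ·) fun _ _ hx _ _ hy =>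
    PGame.equiv_def.2 ⟨PGame.add_le_add' (PGame.equiv_def.1 hx).1 (PGame.equiv_def.1 hy).1,
      PGame.add_le_add' (PGame.equiv_def.1 hx).2 (PGame.equiv_def.1 hy).2⟩⟩

instance : Sub Game.{u} := ⟨fun a b => a + -b⟩

instance : SMul ℤ Game.{u} := ⟨fun n g => zsmulRec nsmulRec n g⟩

end Game

end SetTheory

end CGTPort

open SetTheory PGame

universe u

/-- Ordinal sum `G : H`: players may move in the base `G` (ending all play in the
subordinate) or in the subordinate `H`. -/
def ordinalSum (G : PGame.{u}) : PGame.{u} → PGame.{u}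
  | ⟨yl, yr, yL, yR⟩ =>
    ⟨G.LeftMoves ⊕ yl, G.RightMoves ⊕ yr,
     Sum.elim G.moveLeft fun j => ordinalSum G (yL j),
     Sum.elim G.moveRight fun j => ordinalSum G (yR j)⟩

/-- `G ≜ H`: equivalence modulo domination.  Every Left option of `G` is `≤` some Left
option of `H`, every Left option of `H` is `≤` some Left option of `G`, every Right option
of `G` is `≥` some Right option of `H`, and every Right option of `H` is `≥` some Right
option of `G`. -/
def EquivDom (G H : PGame) : Prop :=
  (∀ i, ∃ j, G.moveLeft i ≤ H.moveLeft j) ∧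
  (∀ j, ∃ i, H.moveLeft j ≤ G.moveLeft i) ∧
  (∀ i, ∃ j, H.moveRight j ≤ G.moveRight i) ∧
  (∀ j, ∃ i, G.moveRight i ≤ H.moveRight j)

/-- The ball `⟨a | b⟩`: the game with exactly one Left option `a` and exactly one Right
option `b`. -/
def ball (a b : PGame.{u}) : PGame.{u} :=
  ⟨PUnit, PUnit, fun _ => a, fun _ => b⟩

/-- The canonical form of a natural number: `0 ≅ ⟨ | ⟩` and `n+1 ≅ ⟨n | ⟩`. -/
def canonNat : ℕ → PGame
  | 0 => 0
  | n + 1 => ⟨PUnit, PEmpty, fun _ => canonNat n, PEmpty.elim⟩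

/-- The canonical form of an integer: for `n ≥ 0` it is `canonNat n`, and the canonical
form of a negative integer is the negative of the canonical form of its absolute value. -/
def canonInt (n : ℤ) : PGame :=
  if 0 ≤ n then canonNat n.toNat else -canonNat (-n).toNat

/-- The game value of the dyadic rational `a / 2 ^ q`. -/
def dyadicVal (a : ℤ) (q : ℕ) : Game :=
  a • (⟦powHalf q⟧ : Game)

/-!
Write `T k` for `G : (−k)` and `δ = 1/2^(p+k+1)`. The only Left option of `T (k+1)` is `a`
and its Right options are `b` and `T k`, so everything follows by induction on `k` from one
halving step: if `G` has value `a + 2δ` and Left options `≤ a`, then every number `T` with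
Left options `≤ a`, Right options `≥ G` and `a < T < G` has value `a + δ`.

The lower bound `x := G − δ ≤ T` is checked directly on options. For the upper bound suppose
`x < T`; both `T` and `x` have all Left options `≤ x − δ`. By induction on games, a number
`y > T + δ` then lies above every `T + nδ`: were `T + nδ < y ≤ T + (n+1)δ`, the Right options
of `y` would lie above the whole ladder, and comparing options gives `T + (n+1)δ ≤ y` and then
`x + (n+2)δ ≤ y`, although `T + (n+1)δ < x + (n+2)δ`. Taking `y = x + 2δ` gives
`T + 2δ < x + 2δ`, a contradiction.
-/

namespace SetTheory

namespace PGame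

infix:50 " ⧏ " => LF

theorem le_of_forall_lf {x y : PGame.{u}} (h₁ : ∀ i, x.moveLeft i ⧏ y)
    (h₂ : ∀ j, x ⧏ y.moveRight j) : x ≤ y :=
  (le_iff x y).2 ⟨h₁, h₂⟩

theorem moveLeft_lf {x : PGame.{u}} (i : x.LeftMoves) : x.moveLeft i ⧏ x :=
  ((le_iff x x).1 (pg_le_refl x)).1 i

theorem lf_moveRight {x : PGame.{u}} (j : x.RightMoves) : x ⧏ x.moveRight j :=
  ((le_iff x x).1 (pg_le_refl x)).2 j

theorem lf_of_moveRight_le {x y : PGame.{u}} {j : x.RightMoves} (h : x.moveRight j ≤ y) :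
    x ⧏ y :=
  (lf_iff x y).2 (Or.inr ⟨j, h⟩)

theorem lf_of_le_moveLeft {x y : PGame.{u}} {i : y.LeftMoves} (h : x ≤ y.moveLeft i) :
    x ⧏ y :=
  (lf_iff x y).2 (Or.inl ⟨i, h⟩)

theorem not_le_and_not_lf (x y : PGame.{u}) : (¬ x ≤ y ↔ y ⧏ x) ∧ (¬ x ⧏ y ↔ y ≤ x) := by
  induction x generalizing y with
  | mk xl xr xL xR ihxL ihxR =>
  induction y with
  | mk yl yr yL yR ihyL ihyR =>
  constructor
  · refine (not_congr (le_iff _ _)).trans (Iff.trans ?_ (lf_iff _ _).symm)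
    simp only [not_and_or, not_forall]
    exact or_congr (exists_congr fun i => (ihxL i _).2) (exists_congr fun j => (ihyR j).2)
  · refine (not_congr (lf_iff _ _)).trans (Iff.trans ?_ (le_iff _ _).symm)
    simp only [not_or, not_exists]
    exact and_congr (forall_congr' fun i => (ihyL i).1) (forall_congr' fun j => (ihxR j _).1)

theorem not_le {x y : PGame.{u}} : ¬ x ≤ y ↔ y ⧏ x := (not_le_and_not_lf x y).1

theorem not_lf {x y : PGame.{u}} : ¬ x ⧏ y ↔ y ≤ x := (not_le_and_not_lf x y).2

theorem lf_irrefl (x : PGame.{u}) : ¬ x ⧏ x := not_lf.2 (pg_le_refl x)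

theorem lf_of_lt {x y : PGame.{u}} (h : x < y) : x ⧏ y := not_le.1 h.2

theorem lf_of_lf_of_le {x y z : PGame.{u}} (h₁ : x ⧏ y) (h₂ : y ≤ z) : x ⧏ z :=
  (le_trans_aux x y z).2.1 h₁ h₂

theorem lf_of_le_of_lf {x y z : PGame.{u}} (h₁ : x ≤ y) (h₂ : y ⧏ z) : x ⧏ z :=
  (le_trans_aux x y z).2.2 h₁ h₂

theorem numeric_def {x : PGame.{u}} : x.Numeric ↔ (∀ i j, x.moveLeft i < x.moveRight j) ∧
    (∀ i, (x.moveLeft i).Numeric) ∧ ∀ j, (x.moveRight j).Numeric := by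
  cases x; exact Iff.rfl

theorem Numeric.mk {x : PGame.{u}} (h₁ : ∀ i j, x.moveLeft i < x.moveRight j)
    (h₂ : ∀ i, (x.moveLeft i).Numeric) (h₃ : ∀ j, (x.moveRight j).Numeric) : x.Numeric :=
  numeric_def.2 ⟨h₁, h₂, h₃⟩

theorem Numeric.left_lt_right {x : PGame.{u}} (o : x.Numeric) (i : x.LeftMoves)
    (j : x.RightMoves) : x.moveLeft i < x.moveRight j := (numeric_def.1 o).1 i j

theorem Numeric.moveLeft {x : PGame.{u}} (o : x.Numeric) (i : x.LeftMoves) :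
    (x.moveLeft i).Numeric := (numeric_def.1 o).2.1 i

theorem Numeric.moveRight {x : PGame.{u}} (o : x.Numeric) (j : x.RightMoves) :
    (x.moveRight j).Numeric := (numeric_def.1 o).2.2 j

theorem numeric_zero : (0 : PGame.{u}).Numeric :=
  numeric_def.2 ⟨fun i => PEmpty.elim i, fun i => PEmpty.elim i, fun j => PEmpty.elim j⟩

theorem Numeric.lf_asymm {x y : PGame.{u}} (ox : x.Numeric) (oy : y.Numeric) :
    x ⧏ y → ¬ y ⧏ x := by
  induction x generalizing y with
  | mk xl xr xL xR ihxL ihxR =>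
  intro h₁ h₂
  rcases (lf_iff _ _).1 h₁ with ⟨i, h₁⟩ | ⟨j, h₁⟩ <;>
    rcases (lf_iff _ _).1 h₂ with ⟨i', h₂⟩ | ⟨j', h₂⟩
  · exact ihxL i' (ox.moveLeft i') (oy.moveLeft i) (lf_of_lf_of_le (moveLeft_lf i') h₁)
      (lf_of_lf_of_le (moveLeft_lf i) h₂)
  · exact lf_irrefl _ (lf_of_lf_of_le (lf_of_lt (oy.left_lt_right i j')) (pg_le_trans h₂ h₁))
  · exact lf_irrefl _ (lf_of_lf_of_le (lf_of_lt (ox.left_lt_right i' j)) (pg_le_trans h₁ h₂))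
  · exact ihxR j (ox.moveRight j) (oy.moveRight j') (lf_of_le_of_lf h₁ (lf_moveRight j'))
      (lf_of_le_of_lf h₂ (lf_moveRight j))

theorem lf_iff_lt {x y : PGame.{u}} (ox : x.Numeric) (oy : y.Numeric) : x ⧏ y ↔ x < y :=
  ⟨fun h => ⟨not_lf.1 (ox.lf_asymm oy h), not_le.2 h⟩, lf_of_lt⟩

theorem Numeric.moveLeft_lt {x : PGame.{u}} (o : x.Numeric) (i : x.LeftMoves) :
    x.moveLeft i < x :=
  (lf_iff_lt (o.moveLeft i) o).1 (moveLeft_lf i)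

theorem Numeric.lt_moveRight {x : PGame.{u}} (o : x.Numeric) (j : x.RightMoves) :
    x < x.moveRight j :=
  (lf_iff_lt o (o.moveRight j)).1 (lf_moveRight j)

theorem equiv_of_exists {x y : PGame.{u}}
    (hl₁ : ∀ i, ∃ j, x.moveLeft i ≈ y.moveLeft j) (hr₁ : ∀ i, ∃ j, x.moveRight i ≈ y.moveRight j)
    (hl₂ : ∀ j, ∃ i, x.moveLeft i ≈ y.moveLeft j) (hr₂ : ∀ j, ∃ i, x.moveRight i ≈ y.moveRight j) :
    x ≈ y := by
  refine equiv_def.2 ⟨le_of_forall_lf (fun i => ?_) (fun j => ?_),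
    le_of_forall_lf (fun j => ?_) (fun i => ?_)⟩
  · obtain ⟨j, h⟩ := hl₁ i; exact lf_of_le_moveLeft (equiv_def.1 h).1
  · obtain ⟨i, h⟩ := hr₂ j; exact lf_of_moveRight_le (equiv_def.1 h).1
  · obtain ⟨i, h⟩ := hl₂ j; exact lf_of_le_moveLeft (equiv_def.1 h).2
  · obtain ⟨j, h⟩ := hr₁ i; exact lf_of_moveRight_le (equiv_def.1 h).2

theorem moveLeft_add_cases {x y : PGame.{u}} (k : (x + y).LeftMoves) :
    (∃ i, (x + y).moveLeft k = x.moveLeft i + y) ∨ ∃ j, (x + y).moveLeft k = x + y.moveLeft j := by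
  cases x; cases y
  rcases k with i | j
  exacts [Or.inl ⟨i, rfl⟩, Or.inr ⟨j, rfl⟩]

theorem exists_moveRight_add_left (x y : PGame.{u}) (i : x.RightMoves) :
    ∃ k, (x + y).moveRight k = x.moveRight i + y := by
  cases x; cases y; exact ⟨Sum.inl i, rfl⟩

theorem exists_moveRight_add_right (x y : PGame.{u}) (j : y.RightMoves) :
    ∃ k, (x + y).moveRight k = x + y.moveRight j := by
  cases x; cases y; exact ⟨Sum.inr j, rfl⟩

theorem exists_moveLeft_add_left (x y : PGame.{u}) (i : x.LeftMoves) :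
    ∃ k, (x + y).moveLeft k = x.moveLeft i + y := by
  cases x; cases y; exact ⟨Sum.inl i, rfl⟩

theorem exists_moveLeft_add_right (x y : PGame.{u}) (j : y.LeftMoves) :
    ∃ k, (x + y).moveLeft k = x + y.moveLeft j := by
  cases x; cases y; exact ⟨Sum.inr j, rfl⟩

theorem add_comm_equiv (x y : PGame.{u}) : x + y ≈ y + x := by
  induction x generalizing y with
  | mk xl xr xL xR ihxL ihxR =>
  induction y with
  | mk yl yr yL yR ihyL ihyR =>
  refine equiv_of_exists ?_ ?_ ?_ ?_
  · rintro (i | j)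
    exacts [⟨Sum.inr i, ihxL i _⟩, ⟨Sum.inl j, ihyL j⟩]
  · rintro (i | j)
    exacts [⟨Sum.inr i, ihxR i _⟩, ⟨Sum.inl j, ihyR j⟩]
  · rintro (j | i)
    exacts [⟨Sum.inr j, ihyL j⟩, ⟨Sum.inl i, ihxL i _⟩]
  · rintro (j | i)
    exacts [⟨Sum.inr j, ihyR j⟩, ⟨Sum.inl i, ihxR i _⟩]

theorem add_assoc_equiv (x y z : PGame.{u}) : x + y + z ≈ x + (y + z) := by
  induction x generalizing y z with
  | mk xl xr xL xR ihxL ihxR =>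
  induction y generalizing z with
  | mk yl yr yL yR ihyL ihyR =>
  induction z with
  | mk zl zr zL zR ihzL ihzR =>
  refine equiv_of_exists ?_ ?_ ?_ ?_
  · rintro ((i | j) | k)
    exacts [⟨Sum.inl i, ihxL i _ _⟩, ⟨Sum.inr (Sum.inl j), ihyL j _⟩, ⟨Sum.inr (Sum.inr k), ihzL k⟩]
  · rintro ((i | j) | k)
    exacts [⟨Sum.inl i, ihxR i _ _⟩, ⟨Sum.inr (Sum.inl j), ihyR j _⟩, ⟨Sum.inr (Sum.inr k), ihzR k⟩]
  · rintro (i | (j | k))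
    exacts [⟨Sum.inl (Sum.inl i), ihxL i _ _⟩, ⟨Sum.inl (Sum.inr j), ihyL j _⟩, ⟨Sum.inr k, ihzL k⟩]
  · rintro (i | (j | k))
    exacts [⟨Sum.inl (Sum.inl i), ihxR i _ _⟩, ⟨Sum.inl (Sum.inr j), ihyR j _⟩, ⟨Sum.inr k, ihzR k⟩]

theorem zero_add_equiv (x : PGame.{u}) : 0 + x ≈ x := by
  induction x with
  | mk xl xr xL xR ihL ihR =>
  refine equiv_of_exists ?_ ?_ (fun j => ⟨Sum.inr j, ihL j⟩) (fun j => ⟨Sum.inr j, ihR j⟩)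
  · rintro (i | i)
    exacts [PEmpty.elim i, ⟨i, ihL i⟩]
  · rintro (i | i)
    exacts [PEmpty.elim i, ⟨i, ihR i⟩]

theorem add_zero_equiv (x : PGame.{u}) : x + 0 ≈ x :=
  Setoid.trans (add_comm_equiv x 0) (zero_add_equiv x)

theorem neg_add_cancel_equiv (x : PGame.{u}) : -x + x ≈ 0 := by
  induction x with
  | mk xl xr xL xR ihL ihR =>
  refine equiv_def.2 ⟨le_of_forall_lf ?_ (fun j => PEmpty.elim j),
    le_of_forall_lf (fun i => PEmpty.elim i) ?_⟩
  · rintro (i | i)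
    · obtain ⟨k, hk⟩ := exists_moveRight_add_right (-xR i) (mk xl xr xL xR) i
      exact lf_of_moveRight_le (j := k) (hk ▸ (equiv_def.1 (ihR i)).1)
    · obtain ⟨k, hk⟩ := exists_moveRight_add_left (-mk xl xr xL xR) (xL i) i
      exact lf_of_moveRight_le (j := k) (hk ▸ (equiv_def.1 (ihL i)).1)
  · rintro (i | i)
    · obtain ⟨k, hk⟩ := exists_moveLeft_add_right (-xL i) (mk xl xr xL xR) i
      exact lf_of_le_moveLeft (i := k) (hk ▸ (equiv_def.1 (ihL i)).2)
    · obtain ⟨k, hk⟩ := exists_moveLeft_add_left (-mk xl xr xL xR) (xR i) i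
      exact lf_of_le_moveLeft (i := k) (hk ▸ (equiv_def.1 (ihR i)).2)

theorem neg_neg (x : PGame.{u}) : -(-x) = x := by
  induction x with
  | mk xl xr xL xR ihL ihR => rw [neg_mk, neg_mk]; simp only [ihL, ihR]

theorem neg_le_neg_iff {x y : PGame.{u}} : -y ≤ -x ↔ x ≤ y :=
  ⟨fun h => by simpa only [neg_neg] using (neg_le_aux _ _).1 h, (neg_le_aux x y).1⟩

theorem neg_lt_neg {x y : PGame.{u}} (h : x < y) : -y < -x :=
  ⟨(neg_le_aux x y).1 h.1, fun h' => h.2 (neg_le_neg_iff.1 h')⟩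

theorem Numeric.neg {x : PGame.{u}} (o : x.Numeric) : (-x).Numeric := by
  induction x with
  | mk xl xr xL xR ihL ihR =>
  exact numeric_def.2 ⟨fun i j => neg_lt_neg (o.left_lt_right j i),
    fun i => ihR i (o.moveRight i), fun j => ihL j (o.moveLeft j)⟩

end PGame

namespace Game

noncomputable instance instLEGame : LE Game.{u} :=
  ⟨Quotient.lift₂ (fun x y : PGame.{u} => x ≤ y) (fun _ _ _ _ hx hy => propext
    ⟨fun h => PGame.pg_le_trans (PGame.equiv_def.1 hx).2
        (PGame.pg_le_trans h (PGame.equiv_def.1 hy).1),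
     fun h => PGame.pg_le_trans (PGame.equiv_def.1 hx).1
        (PGame.pg_le_trans h (PGame.equiv_def.1 hy).2)⟩)⟩

noncomputable instance instPreorderGame : Preorder Game.{u} where
  le a b := a ≤ b
  lt a b := a ≤ b ∧ ¬ b ≤ a
  lt_iff_le_not_ge _ _ := Iff.rfl
  le_refl := by rintro ⟨x⟩; exact PGame.pg_le_refl x
  le_trans := by rintro ⟨x⟩ ⟨y⟩ ⟨z⟩ h₁ h₂; exact PGame.pg_le_trans h₁ h₂

noncomputable instance instPartialOrderGame : PartialOrder Game.{u} where
  toPreorder := instPreorderGame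
  le_antisymm := by rintro ⟨x⟩ ⟨y⟩ h₁ h₂; exact Quot.sound (PGame.equiv_def.2 ⟨h₁, h₂⟩)

instance instAddCommGroupGame : AddCommGroup Game.{u} where
  add a b := a + b
  zero := (0 : Game.{u})
  neg a := -a
  sub a b := a - b
  sub_eq_add_neg _ _ := rfl
  add_assoc := by rintro ⟨x⟩ ⟨y⟩ ⟨z⟩; exact Quot.sound (PGame.add_assoc_equiv x y z)
  zero_add := by rintro ⟨x⟩; exact Quot.sound (PGame.zero_add_equiv x)
  add_zero := by rintro ⟨x⟩; exact Quot.sound (PGame.add_zero_equiv x)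
  add_comm := by rintro ⟨x⟩ ⟨y⟩; exact Quot.sound (PGame.add_comm_equiv x y)
  neg_add_cancel := by rintro ⟨x⟩; exact Quot.sound (PGame.neg_add_cancel_equiv x)
  nsmul := nsmulRec
  zsmul := zsmulRec nsmulRec

instance instIsOrderedAddMonoidGame : IsOrderedAddMonoid Game.{u} where
  add_le_add_left := by
    rintro ⟨x⟩ ⟨y⟩ h ⟨z⟩
    exact PGame.add_le_add' (x := x) (x' := y) h (PGame.pg_le_refl z)

end Game

namespace PGame

theorem lt_iff_game_lt {x y : PGame.{u}} : x < y ↔ (⟦x⟧ : Game) < ⟦y⟧ := Iff.rfl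

theorem quot_zero : (⟦(0 : PGame.{u})⟧ : Game) = 0 := rfl

theorem quot_add (x y : PGame.{u}) : (⟦x + y⟧ : Game) = ⟦x⟧ + ⟦y⟧ := rfl

theorem quot_neg (x : PGame.{u}) : (⟦-x⟧ : Game) = -⟦x⟧ := rfl

theorem quot_sub (x y : PGame.{u}) : (⟦x - y⟧ : Game) = ⟦x⟧ - ⟦y⟧ := rfl

theorem Numeric.game_lt_of_not_le {x y : PGame.{u}} (ox : x.Numeric) (oy : y.Numeric)
    (h : ¬ (⟦y⟧ : Game) ≤ ⟦x⟧) : (⟦x⟧ : Game) < ⟦y⟧ :=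
  (lf_iff_lt ox oy).1 (not_le.1 h)

theorem game_le_of_forall_lt {x y : PGame.{u}} (hL : ∀ i, (⟦x.moveLeft i⟧ : Game) < ⟦y⟧)
    (hR : ∀ j, (⟦x⟧ : Game) < ⟦y.moveRight j⟧) : (⟦x⟧ : Game) ≤ ⟦y⟧ :=
  le_of_forall_lf (fun i => lf_of_lt (hL i)) (fun j => lf_of_lt (hR j))

theorem Numeric.add {x y : PGame.{u}} (ox : x.Numeric) (oy : y.Numeric) : (x + y).Numeric := by
  induction x generalizing y with
  | mk xl xr xL xR ihxL ihxR =>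
  induction y with
  | mk yl yr yL yR ihyL ihyR =>
  have hxl := fun i => lt_iff_game_lt.1 (ox.moveLeft_lt i)
  have hxr := fun j => lt_iff_game_lt.1 (ox.lt_moveRight j)
  have hyl := fun i => lt_iff_game_lt.1 (oy.moveLeft_lt i)
  have hyr := fun j => lt_iff_game_lt.1 (oy.lt_moveRight j)
  refine numeric_def.2 ⟨?_, ?_, ?_⟩
  · rintro (i | i) (j | j) <;> apply lt_iff_game_lt.2
    · exact add_lt_add_left ((hxl i).trans (hxr j)) (⟦PGame.mk yl yr yL yR⟧ : Game)
    · exact add_lt_add (hxl i) (hyr j)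
    · exact add_lt_add (hxr j) (hyl i)
    · exact add_lt_add_right ((hyl i).trans (hyr j)) (⟦PGame.mk xl xr xL xR⟧ : Game)
  · rintro (i | i)
    exacts [ihxL i (ox.moveLeft i) oy, ihyL i (oy.moveLeft i)]
  · rintro (j | j)
    exacts [ihxR j (ox.moveRight j) oy, ihyR j (oy.moveRight j)]

theorem powHalf_moveLeft (n : ℕ) (i : (powHalf.{u} n).LeftMoves) :
    (powHalf.{u} n).moveLeft i = 0 := by
  cases n <;> rfl

theorem zero_lf_powHalf (n : ℕ) : (0 : PGame.{u}) ⧏ powHalf n := by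
  cases n <;> exact lf_of_le_moveLeft (i := PUnit.unit) (pg_le_refl 0)

theorem powHalf_pos (n : ℕ) : (0 : PGame.{u}) < powHalf n := by
  refine ⟨le_of_forall_lf (fun i => PEmpty.elim i) (fun j => ?_), not_le.2 (zero_lf_powHalf n)⟩
  cases n with
  | zero => exact PEmpty.elim j
  | succ n => exact zero_lf_powHalf n

theorem numeric_powHalf (n : ℕ) : (powHalf.{u} n).Numeric := by
  induction n with
  | zero => exact numeric_def.2 ⟨fun _ j => PEmpty.elim j, fun _ => numeric_zero,
      fun j => PEmpty.elim j⟩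
  | succ n ih => exact numeric_def.2 ⟨fun _ _ => powHalf_pos n, fun _ => numeric_zero,
      fun _ => ih⟩

theorem powHalf_succ_lt_powHalf (n : ℕ) : powHalf.{u} (n + 1) < powHalf n :=
  (lf_iff_lt (numeric_powHalf _) (numeric_powHalf _)).1
    (lf_of_moveRight_le (j := PUnit.unit) (pg_le_refl _))

theorem quot_powHalf_succ_add_self (n : ℕ) :
    (⟦powHalf.{u} (n + 1)⟧ : Game) + ⟦powHalf (n + 1)⟧ = ⟦powHalf n⟧ := by
  have hpos : ∀ m, (0 : Game.{u}) < ⟦powHalf m⟧ := powHalf_pos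
  have hlt : ∀ m, (⟦powHalf.{u} (m + 1)⟧ : Game) < ⟦powHalf m⟧ := powHalf_succ_lt_powHalf
  have hstep : ∀ n, (∀ j, (⟦powHalf.{u} (n + 1) + powHalf (n + 1)⟧ : Game) <
      ⟦(powHalf n).moveRight j⟧) →
      (⟦powHalf (n + 1)⟧ : Game) + ⟦powHalf (n + 1)⟧ = ⟦powHalf n⟧ := by
    intro n hR
    refine le_antisymm (game_le_of_forall_lt (fun k => ?_) hR)
      (game_le_of_forall_lt (fun i => ?_) ?_)
    · rcases moveLeft_add_cases k with ⟨i, hi⟩ | ⟨i, hi⟩ <;>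
        rw [hi, powHalf_moveLeft, quot_add, quot_zero]
      · rw [zero_add]; exact hlt n
      · rw [add_zero]; exact hlt n
    · rw [powHalf_moveLeft, quot_zero]
      exact add_pos (hpos _) (hpos _)
    · rintro (j | j)
      · exact lt_add_of_pos_right _ (hpos (n + 1))
      · exact lt_add_of_pos_left _ (hpos (n + 1))
  induction n with
  | zero => exact hstep 0 (fun j => PEmpty.elim j)
  | succ m ih =>
    refine hstep (m + 1) (fun _ => ?_)
    calc (⟦powHalf (m + 2)⟧ : Game) + ⟦powHalf (m + 2)⟧
        < ⟦powHalf (m + 1)⟧ + ⟦powHalf (m + 1)⟧ := add_lt_add (hlt _) (hlt _)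
      _ = ⟦powHalf m⟧ := ih

theorem numeric_nsmulRec {x : PGame.{u}} (o : x.Numeric) : ∀ n, (nsmulRec n x).Numeric
  | 0 => numeric_zero
  | n + 1 => (numeric_nsmulRec o n).add o

theorem quot_nsmulRec (x : PGame.{u}) : ∀ n, (⟦nsmulRec n x⟧ : Game) = n • ⟦x⟧
  | 0 => (zero_nsmul _).symm
  | n + 1 => by rw [succ_nsmul, ← quot_nsmulRec x n]; rfl

theorem quot_moveLeft_nsmulRec_succ {δ : PGame.{u}} (hδ : ∀ i, (⟦δ.moveLeft i⟧ : Game) = 0)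
    (n : ℕ) (k : (nsmulRec (n + 1) δ).LeftMoves) :
    (⟦(nsmulRec (n + 1) δ).moveLeft k⟧ : Game) = n • ⟦δ⟧ := by
  change (⟦(nsmulRec n δ + δ).moveLeft k⟧ : Game) = _
  rcases moveLeft_add_cases k with ⟨i, hi⟩ | ⟨i, hi⟩
  · cases n with
    | zero => exact PEmpty.elim i
    | succ n => rw [hi, quot_add, quot_moveLeft_nsmulRec_succ hδ n i, succ_nsmul]
  · rw [hi, quot_add, hδ, add_zero, quot_nsmulRec]

theorem add_nsmul_succ_le_of_forall_lt {x y δ : PGame.{u}}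
    (hδ : ∀ i, (⟦δ.moveLeft i⟧ : Game) = 0) (n : ℕ)
    (hL : ∀ i, (⟦x.moveLeft i⟧ : Game) + (n + 1) • ⟦δ⟧ < ⟦y⟧)
    (h : (⟦x⟧ : Game) + n • ⟦δ⟧ < ⟦y⟧)
    (hR : ∀ j, (⟦x⟧ : Game) + (n + 1) • ⟦δ⟧ < ⟦y.moveRight j⟧) :
    (⟦x⟧ : Game) + (n + 1) • ⟦δ⟧ ≤ ⟦y⟧ := by
  rw [← quot_nsmulRec, ← quot_add]
  refine game_le_of_forall_lt (fun k => ?_) (fun j => by rw [quot_add, quot_nsmulRec]; exact hR j)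
  rcases moveLeft_add_cases k with ⟨i, hi⟩ | ⟨i, hi⟩
  · rw [hi, quot_add, quot_nsmulRec]; exact hL i
  · rw [hi, quot_add, quot_moveLeft_nsmulRec_succ hδ]; exact h

theorem not_le_add_nsmul_succ {x T y δ : PGame.{u}} (hδ : ∀ i, (⟦δ.moveLeft i⟧ : Game) = 0)
    (hTL : ∀ i, (⟦T.moveLeft i⟧ : Game) + ⟦δ⟧ ≤ ⟦x⟧)
    (hxL : ∀ i, (⟦x.moveLeft i⟧ : Game) + ⟦δ⟧ ≤ ⟦x⟧)
    (hxT : (⟦x⟧ : Game) < ⟦T⟧) (hTx : (⟦T⟧ : Game) < ⟦x⟧ + ⟦δ⟧)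
    (hR : ∀ j (m : ℕ), (⟦T⟧ : Game) + m • ⟦δ⟧ < ⟦y.moveRight j⟧) {n : ℕ}
    (hn : (⟦T⟧ : Game) + n • ⟦δ⟧ < ⟦y⟧) :
    ¬ (⟦y⟧ : Game) ≤ ⟦T⟧ + (n + 1) • ⟦δ⟧ := by
  intro hle
  have hT : (⟦T⟧ : Game) + (n + 1) • ⟦δ⟧ ≤ ⟦y⟧ := by
    refine add_nsmul_succ_le_of_forall_lt hδ n (fun i => ?_) hn (fun j => hR j (n + 1))
    calc (⟦T.moveLeft i⟧ : Game) + (n + 1) • ⟦δ⟧ = ⟦T.moveLeft i⟧ + ⟦δ⟧ + n • ⟦δ⟧ := by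
          rw [succ_nsmul]; abel
      _ ≤ ⟦x⟧ + n • ⟦δ⟧ := by gcongr; exact hTL i
      _ < ⟦T⟧ + n • ⟦δ⟧ := by gcongr
      _ < _ := hn
  have hxT' : (⟦x⟧ : Game) + (n + 1) • ⟦δ⟧ < ⟦T⟧ + (n + 1) • ⟦δ⟧ := by gcongr
  have hx : (⟦x⟧ : Game) + (n + 1 + 1) • ⟦δ⟧ ≤ ⟦y⟧ := by
    refine add_nsmul_succ_le_of_forall_lt hδ (n + 1) (fun i => ?_) (hxT'.trans_le hT)
      (fun j => (by gcongr : (⟦x⟧ : Game) + _ < _).trans (hR j (n + 1 + 1)))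
    calc (⟦x.moveLeft i⟧ : Game) + (n + 1 + 1) • ⟦δ⟧
        = ⟦x.moveLeft i⟧ + ⟦δ⟧ + (n + 1) • ⟦δ⟧ := by rw [succ_nsmul _ (n + 1)]; abel
      _ ≤ ⟦x⟧ + (n + 1) • ⟦δ⟧ := by gcongr; exact hxL i
      _ < _ := hxT'.trans_le hT
  refine lt_irrefl ((⟦x⟧ : Game) + (n + 1 + 1) • ⟦δ⟧) ?_
  calc (⟦x⟧ : Game) + (n + 1 + 1) • ⟦δ⟧ ≤ ⟦y⟧ := hx
    _ ≤ ⟦T⟧ + (n + 1) • ⟦δ⟧ := hle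
    _ < ⟦x⟧ + ⟦δ⟧ + (n + 1) • ⟦δ⟧ := by gcongr
    _ = _ := by rw [succ_nsmul _ (n + 1)]; abel

theorem add_nsmul_lt_of_add_lt {x T δ : PGame.{u}} (hδ : ∀ i, (⟦δ.moveLeft i⟧ : Game) = 0)
    (oδ : δ.Numeric) (oT : T.Numeric) (hTL : ∀ i, (⟦T.moveLeft i⟧ : Game) + ⟦δ⟧ ≤ ⟦x⟧)
    (hxL : ∀ i, (⟦x.moveLeft i⟧ : Game) + ⟦δ⟧ ≤ ⟦x⟧)
    (hxT : (⟦x⟧ : Game) < ⟦T⟧) (hTx : (⟦T⟧ : Game) < ⟦x⟧ + ⟦δ⟧)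
    {y : PGame.{u}} (oy : y.Numeric) (hy : (⟦T⟧ : Game) + ⟦δ⟧ < ⟦y⟧) (n : ℕ) :
    (⟦T⟧ : Game) + n • ⟦δ⟧ < ⟦y⟧ := by
  have hδpos : (0 : Game) < ⟦δ⟧ := (lt_add_iff_pos_right _).1 (hxT.trans hTx)
  induction y generalizing n with
  | mk yl yr yL yR _ ih =>
  have hR : ∀ j m, (⟦T⟧ : Game) + m • ⟦δ⟧ < ⟦yR j⟧ := fun j =>
    ih j (oy.moveRight j) (hy.trans (oy.lt_moveRight j))
  induction n with
  | zero => rw [zero_nsmul, add_zero]; exact (lt_add_of_pos_right _ hδpos).trans hy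
  | succ n hn =>
    have h := not_le_add_nsmul_succ (y := mk yl yr yL yR) hδ hTL hxL hxT hTx hR hn
    rw [← quot_nsmulRec, ← quot_add] at h ⊢
    exact (oT.add (numeric_nsmulRec oδ (n + 1))).game_lt_of_not_le oy h

theorem game_le_of_lt_add {x T δ : PGame.{u}} (hδ : ∀ i, (⟦δ.moveLeft i⟧ : Game) = 0)
    (oδ : δ.Numeric) (oT : T.Numeric) (ox : x.Numeric)
    (hTL : ∀ i, (⟦T.moveLeft i⟧ : Game) + ⟦δ⟧ ≤ ⟦x⟧)
    (hxL : ∀ i, (⟦x.moveLeft i⟧ : Game) + ⟦δ⟧ ≤ ⟦x⟧) (hTx : (⟦T⟧ : Game) < ⟦x⟧ + ⟦δ⟧) :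
    (⟦T⟧ : Game) ≤ ⟦x⟧ := by
  by_contra hTx'
  have hxT := ox.game_lt_of_not_le oT hTx'
  have h := add_nsmul_lt_of_add_lt hδ oδ oT hTL hxL hxT hTx ((ox.add oδ).add oδ)
    (by rw [quot_add, quot_add]; gcongr) 2
  rw [quot_add, quot_add, two_nsmul, ← add_assoc] at h
  exact lt_asymm hxT (lt_of_add_lt_add_right (lt_of_add_lt_add_right h))

theorem game_eq_add_powHalf_succ {a G T : PGame.{u}} {q : ℕ} (oG : G.Numeric) (oT : T.Numeric)
    (hG : (⟦G⟧ : Game) = ⟦a⟧ + ⟦powHalf q⟧) (hGL : ∀ i, (⟦G.moveLeft i⟧ : Game) ≤ ⟦a⟧)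
    (hTL : ∀ i, (⟦T.moveLeft i⟧ : Game) ≤ ⟦a⟧) (haT : (⟦a⟧ : Game) < ⟦T⟧)
    (hTG : (⟦T⟧ : Game) < ⟦G⟧) (hTR : ∀ j, (⟦G⟧ : Game) ≤ ⟦T.moveRight j⟧) :
    (⟦T⟧ : Game) = ⟦a⟧ + ⟦powHalf (q + 1)⟧ := by
  have hδ : ∀ i, (⟦(powHalf.{u} (q + 1)).moveLeft i⟧ : Game) = 0 := fun i => by
    rw [powHalf_moveLeft, quot_zero]
  have hδpos : (0 : Game) < ⟦powHalf (q + 1)⟧ := powHalf_pos _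
  have hδδ := quot_powHalf_succ_add_self.{u} q
  have hx : (⟦G - powHalf (q + 1)⟧ : Game) = ⟦a⟧ + ⟦powHalf (q + 1)⟧ := by
    rw [quot_sub, hG, ← hδδ]; abel
  have hxL : ∀ i, (⟦(G - powHalf (q + 1)).moveLeft i⟧ : Game) ≤ ⟦a⟧ := fun k => by
    change (⟦(G + -powHalf (q + 1)).moveLeft k⟧ : Game) ≤ ⟦a⟧
    rcases moveLeft_add_cases k with ⟨i, hi⟩ | ⟨i, hi⟩
    · rw [hi, quot_add, quot_neg]
      exact add_le_of_le_of_nonpos (hGL i) (neg_nonpos.2 hδpos.le)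
    · rw [hi, quot_add]
      change (⟦G⟧ : Game) + -⟦powHalf q⟧ ≤ ⟦a⟧
      rw [hG, add_neg_cancel_right]
  refine le_antisymm ?_ ?_
  · rw [← hx]
    refine game_le_of_lt_add hδ (numeric_powHalf _) oT (oG.add (numeric_powHalf _).neg)
      (fun i => ?_) (fun i => ?_) ?_ <;> rw [hx]
    · gcongr; exact hTL i
    · gcongr; exact hxL i
    · rwa [add_assoc, hδδ, ← hG]
  · rw [← hx]
    refine game_le_of_forall_lt (fun k => (hxL k).trans_lt haT) (fun j => ?_)
    rw [quot_sub]
    exact (sub_lt_self _ hδpos).trans_le (hTR j)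

end PGame

end SetTheory

theorem moveLeft_ordinalSum_ball_neg_canonNat (a b : PGame.{u}) (k : ℕ)
    (i : (ordinalSum (ball a b) (-canonNat k)).LeftMoves) :
    (ordinalSum (ball a b) (-canonNat k)).moveLeft i = a := by
  cases k <;> rcases i with i | i
  exacts [rfl, PEmpty.elim i, rfl, PEmpty.elim i]

theorem numeric_and_quot_ordinalSum_ball_neg_canonNat {a b : PGame.{u}} {p : ℕ}
    (oa : a.Numeric) (ob : b.Numeric) (oG : (ball a b).Numeric)
    (hG : (⟦ball a b⟧ : Game) = ⟦a⟧ + ⟦powHalf p⟧) (k : ℕ) :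
    (ordinalSum (ball a b) (-canonNat k)).Numeric ∧
      (⟦ordinalSum (ball a b) (-canonNat k)⟧ : Game) = ⟦a⟧ + ⟦powHalf (p + k)⟧ ∧
      (⟦ordinalSum (ball a b) (-canonNat k)⟧ : Game) < ⟦b⟧ := by
  have hab : a < b := oG.left_lt_right PUnit.unit PUnit.unit
  have hGb : ball a b < b := oG.lt_moveRight PUnit.unit
  have hTL := moveLeft_ordinalSum_ball_neg_canonNat a b
  induction k with
  | zero =>
    have oT : (ordinalSum (ball a b) (-canonNat 0)).Numeric := Numeric.mk
      (by rintro (i | i) (j | j); exacts [hab, j.elim, i.elim, i.elim])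
      (by rintro (i | i); exacts [oa, i.elim]) (by rintro (j | j); exacts [ob, j.elim])
    have hT : (⟦ordinalSum (ball a b) (-canonNat 0)⟧ : Game) = ⟦ball a b⟧ := by
      refine le_antisymm (game_le_of_forall_lt ?_ fun _ => oT.lt_moveRight (Sum.inl PUnit.unit))
        (game_le_of_forall_lt (fun _ => oT.moveLeft_lt (Sum.inl PUnit.unit)) ?_)
      · rintro (i | i)
        exacts [oG.moveLeft_lt i, i.elim]
      · rintro (j | j)
        exacts [hGb, j.elim]
    exact ⟨oT, hT.trans hG, hT ▸ hGb⟩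
  | succ k ih =>
    obtain ⟨oT, hT, hTb⟩ := ih
    have haT : (⟦a⟧ : Game) < ⟦ordinalSum (ball a b) (-canonNat k)⟧ := by
      rw [hT]; exact lt_add_of_pos_right _ (powHalf_pos _)
    have oT' : (ordinalSum (ball a b) (-canonNat (k + 1))).Numeric := Numeric.mk
      (by rintro (i | i) (j | j); exacts [hab, haT, i.elim, i.elim])
      (by rintro (i | i); exacts [oa, i.elim]) (by rintro (j | j); exacts [ob, oT])
    have hlt : ordinalSum (ball a b) (-canonNat (k + 1)) < ordinalSum (ball a b) (-canonNat k) :=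
      oT'.lt_moveRight (Sum.inr PUnit.unit)
    refine ⟨oT', ?_, hlt.trans hTb⟩
    refine game_eq_add_powHalf_succ oT oT' hT (fun i => by rw [hTL]) (fun i => by rw [hTL])
      (oT'.moveLeft_lt (Sum.inl PUnit.unit)) hlt ?_
    rintro (j | j)
    exacts [hTb.le, le_rfl]

/-- For a ball `G ≅ ⟨a | b⟩` of numbers with `G − a = 1/2^p` as values, and any positive
integer `k`, with `−k` in canonical form: `G : (−k) = G − 1/2^p + 1/2^{p+k}`. -/
theorem ordinalSum_neg_int_value (a b : PGame) (ha : a.Numeric) (hb : b.Numeric)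
    (hG : (ball a b).Numeric) (p : ℕ)
    (hv : (⟦ball a b⟧ : Game) - ⟦a⟧ = ⟦powHalf p⟧) (k : ℕ) (hk : 0 < k) :
    (⟦ordinalSum (ball a b) (canonInt (-(k : ℤ)))⟧ : Game) =
      ⟦ball a b⟧ - ⟦powHalf p⟧ + ⟦powHalf (p + k)⟧ := by
  have hv' : (⟦ball a b⟧ : Game) = ⟦a⟧ + ⟦powHalf p⟧ := by
    rw [← hv]; abel
  have hcanon : canonInt (-(k : ℤ)) = -canonNat k := by
    rw [canonInt, if_neg (by omega), Int.neg_neg, Int.toNat_natCast]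
  rw [hcanon, (numeric_and_quot_ordinalSum_ball_neg_canonNat ha hb hG hv' k).2.1, hv']
  abel
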